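/- The image of the closure map c on Hom(A, C^B) given by c(γ)(a) = {g : V(B) → V(C) | g(b) ∈ {f(b) : f ∈ γ(a)}} equals the image of the inclusion j : Hom(A × B, C) → Hom(A, C^B) given by j(α)(a) = {f | f(b) ∈ α(a,b) for all b}. Consequently Hom(A × B, C) is isomorphic as a poset to the image of c. -/

import Mathlib

/-- A graph: a symmetric relation on a vertex set, loops allowed. -/
structure LoopGraph (V : Type) : Type where
  Adj : V → V → Prop
  symm : ∀ u v : V, Adj u v → Adj v u

/-- A graph homomorphism: a vertex map preserving adjacency. -/
def LoopGraph.IsHom {V W : Type} (G : LoopGraph V) (H : LoopGraph W) (f : V → W) : Prop :=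
  ∀ u v : V, G.Adj u v → H.Adj (f u) (f v)

/-- The categorical product of graphs. -/
def LoopGraph.prod {V W : Type} (G : LoopGraph V) (H : LoopGraph W) : LoopGraph (V × W) :=
  ⟨fun p q => G.Adj p.1 q.1 ∧ H.Adj p.2 q.2,
   fun p q h => ⟨G.symm _ _ h.1, H.symm _ _ h.2⟩⟩

/-- The categorical exponential graph `H^G`: vertices are all functions `V(G) → V(H)`. -/
def LoopGraph.exp {V W : Type} (G : LoopGraph V) (H : LoopGraph W) : LoopGraph (V → W) :=
  ⟨fun f f' => ∀ v v' : V, G.Adj v v' → H.Adj (f v) (f' v'),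
   fun f f' h v v' hvv' => H.symm _ _ (h v' v (G.symm _ _ hvv'))⟩

/-- Multihomomorphisms between graphs. -/
def LoopGraph.IsMultiHom {V W : Type} (G : LoopGraph V) (H : LoopGraph W) (η : V → Set W) : Prop :=
  (∀ v, (η v).Nonempty) ∧
    ∀ x y : V, G.Adj x y → ∀ x' ∈ η x, ∀ y' ∈ η y, H.Adj x' y'

/-- The Hom poset, ordered by pointwise containment. -/
def MultiHom {V W : Type} (G : LoopGraph V) (H : LoopGraph W) : Type :=
  {η : V → Set W // LoopGraph.IsMultiHom G H η}

instance {V W : Type} (G : LoopGraph V) (H : LoopGraph W) : PartialOrder (MultiHom G H) :=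
  Subtype.partialOrder _

/-- The reflexive path `Iₙ` on `{0, …, n}`. -/
def pathGraph (n : ℕ) : LoopGraph (Fin (n + 1)) :=
  ⟨fun i j => (i : ℕ) = j ∨ (i : ℕ) + 1 = j ∨ (j : ℕ) + 1 = i,
   fun i j h => by tauto⟩

/-- ×-homotopy of vertex maps. -/
def Homotopic {V W : Type} (G : LoopGraph V) (H : LoopGraph W) (f g : V → W) : Prop :=
  ∃ n : ℕ, 1 ≤ n ∧ ∃ F : V × Fin (n + 1) → W,
    (G.prod (pathGraph n)).IsHom H F ∧
    (∀ v, F (v, 0) = f v) ∧ (∀ v, F (v, Fin.last n) = g v)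

/-- The singleton-valued multihomomorphism associated to a graph homomorphism. -/
def singletonMH {V W : Type} {G : LoopGraph V} {H : LoopGraph W} (f : V → W)
    (hf : G.IsHom H f) : MultiHom G H :=
  ⟨fun v => {f v},
   ⟨fun v => ⟨f v, rfl⟩, fun x y hxy x' hx' y' hy' => by
      simp only [Set.mem_singleton_iff] at hx' hy'
      subst hx'; subst hy'; exact hf _ _ hxy⟩⟩

/-- Disjoint union (coproduct) of graphs. -/
def LoopGraph.coprod {V W : Type} (G : LoopGraph V) (H : LoopGraph W) : LoopGraph (V ⊕ W) :=
  ⟨Sum.LiftRel G.Adj H.Adj,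
   fun u v h => by
    cases h with
    | inl h => exact Sum.LiftRel.inl (G.symm _ _ h)
    | inr h => exact Sum.LiftRel.inr (H.symm _ _ h)⟩

/-- The induced subgraph obtained by deleting the vertex `v`. -/
def LoopGraph.deleteVert {V : Type} (G : LoopGraph V) (v : V) : LoopGraph {x : V // x ≠ v} :=
  ⟨fun a b => G.Adj a.1 b.1, fun a b h => G.symm _ _ h⟩

/-- The cartesian (box) product of graphs. -/
def LoopGraph.box {V W : Type} (G : LoopGraph V) (H : LoopGraph W) : LoopGraph (V × W) :=
  ⟨fun p q => (G.Adj p.1 q.1 ∧ p.2 = q.2) ∨ (p.1 = q.1 ∧ H.Adj p.2 q.2),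
   fun p q h => by
    rcases h with ⟨h1, h2⟩ | ⟨h1, h2⟩
    · exact Or.inl ⟨G.symm _ _ h1, h2.symm⟩
    · exact Or.inr ⟨h1.symm, H.symm _ _ h2⟩⟩

/-- The cartesian exponential graph: vertices are the graph homomorphisms. -/
def LoopGraph.cartExp {V W : Type} (G : LoopGraph V) (H : LoopGraph W) :
    LoopGraph {f : V → W // G.IsHom H f} :=
  ⟨fun f f' => ∀ b, H.Adj (f.1 b) (f'.1 b), fun f f' h b => H.symm _ _ (h b)⟩

/-- A ×-homotopy equivalence of graphs. -/
def HtpyEquiv {V W : Type} (G : LoopGraph V) (H : LoopGraph W) (f : V → W) : Prop :=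
  G.IsHom H f ∧ ∃ g : W → V, H.IsHom G g ∧
    Homotopic G G (g ∘ f) id ∧ Homotopic H H (f ∘ g) id

/-- The one-point looped graph. -/
def oneGraph : LoopGraph Unit := ⟨fun _ _ => True, fun _ _ _ => trivial⟩


/-!
The map `j` is currying, the upper adjoint of uncurrying `uncurry γ (a, b) = {f b | f ∈ γ a}`,
and uncurrying undoes currying: since every `α (a, b)` is nonempty, any `x ∈ α (a, b)` extends
to a function `f` with `f b' ∈ α (a, b')` for all `b'`. So uncurry and curry form a Galois
insertion, `c = curry ∘ uncurry` is its closure operator, and the image of `c` is that of the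
order embedding `curry`.
-/

namespace MultiHom

variable {VA VB VC : Type} {A : LoopGraph VA} {B : LoopGraph VB} {C : LoopGraph VC}

noncomputable def curry (α : MultiHom (A.prod B) C) : MultiHom A (B.exp C) :=
  ⟨fun a => {f | ∀ b, f b ∈ α.1 (a, b)},
   fun a => ⟨fun b => (α.2.1 (a, b)).some, fun b => (α.2.1 (a, b)).some_mem⟩,
   fun _ _ ha _ hf _ hf' _ _ hb => α.2.2 _ _ ⟨ha, hb⟩ _ (hf _) _ (hf' _)⟩

def uncurry (γ : MultiHom A (B.exp C)) : MultiHom (A.prod B) C :=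
  ⟨fun p => (fun f => f p.2) '' γ.1 p.1,
   fun p => (γ.2.1 p.1).image _,
   fun _ _ hpq _ ⟨_, hf, hx⟩ _ ⟨_, hf', hy⟩ =>
     hx ▸ hy ▸ γ.2.2 _ _ hpq.1 _ hf _ hf' _ _ hpq.2⟩

theorem gc_uncurry_curry : GaloisConnection (uncurry (A := A) (B := B) (C := C)) curry :=
  fun _ _ => ⟨fun h a f hf b => h (a, b) ⟨f, hf, rfl⟩,
    fun h p _ ⟨_, hf, hx⟩ => hx ▸ h p.1 hf p.2⟩

theorem le_uncurry_curry (α : MultiHom (A.prod B) C) : α ≤ uncurry (curry α) := by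
  classical
  intro ⟨a, b⟩ x hx
  let f : VB → VC := Function.update (fun b' => (α.2.1 (a, b')).some) b x
  have hf : f ∈ (curry α).1 a := by
    intro b'
    rcases eq_or_ne b' b with rfl | hb'
    · simpa [f] using hx
    · simpa [f, hb'] using (α.2.1 (a, b')).some_mem
  exact ⟨f, hf, by simp [f]⟩

noncomputable def curryGaloisInsertion :
    GaloisInsertion (uncurry (A := A) (B := B) (C := C)) curry :=
  gc_uncurry_curry.toGaloisInsertion le_uncurry_curry

noncomputable def curryEmbedding : MultiHom (A.prod B) C ↪o MultiHom A (B.exp C) :=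
  OrderEmbedding.ofMapLEIff curry fun _ _ => curryGaloisInsertion.u_le_u_iff

theorem range_curry_comp_uncurry :
    Set.range (curry ∘ uncurry (A := A) (B := B) (C := C)) = Set.range curry :=
  curryGaloisInsertion.l_surjective.range_comp curry

end MultiHom

/-- the image of the closure map `c` on `Hom(A, C^B)` equals the image
of the inclusion `j : Hom(A × B, C) → Hom(A, C^B)`; consequently `Hom(A × B, C)` is
isomorphic as a poset to the image of `c`. -/
theorem stmt_6 {VA VB VC : Type} (A : LoopGraph VA) (B : LoopGraph VB) (C : LoopGraph VC) :
    ∃ (j : MultiHom (A.prod B) C → MultiHom A (LoopGraph.exp B C))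
      (c : MultiHom A (LoopGraph.exp B C) → MultiHom A (LoopGraph.exp B C)),
      (∀ (α : MultiHom (A.prod B) C) (a : VA),
        (j α).1 a = {f : VB → VC | ∀ b : VB, f b ∈ α.1 (a, b)}) ∧
      (∀ (γ : MultiHom A (LoopGraph.exp B C)) (a : VA),
        (c γ).1 a = {g : VB → VC | ∀ b : VB, ∃ f ∈ γ.1 a, f b = g b}) ∧
      Set.range c = Set.range j ∧
      Nonempty (MultiHom (A.prod B) C ≃o ↥(Set.range c)) := by
  refine ⟨MultiHom.curry, MultiHom.curry ∘ MultiHom.uncurry, fun _ _ => rfl, fun _ _ => rfl,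
    MultiHom.range_curry_comp_uncurry, ?_⟩
  rw [MultiHom.range_curry_comp_uncurry]
  exact ⟨MultiHom.curryEmbedding.orderIso⟩
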